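/- For the append program, the derivation from goal append([X|Y], Y, [Z|Y]) produces the successive selected subgoals A_0 = append(Y,Y,Y), A_1 = append(Y1,[X1|Y1],Y1), A_2 = append(Y2,[X1,X2|Y2],Y2), and for each n the atom A_{n+1} is an expanded variant of A_n with |A_{n+1}| > |A_n|; hence this derivation satisfies the non-termination criterion. -/

import Mathlib

/-!
The swap `Y_n ↔ Y_{n+1}` is an injective renaming and an involution, so it undoes the
substitution in `L (n + 1)` and sends `A_{n+1}` to `append(Y_n, [X_{n+1} | L n], Y_n)`: this is
`A_n` with its middle argument `L n` grown into `cons(X_{n+1}, L n)`. Renaming preserves size,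
so each step adds exactly the two symbols `cons` and `X_{n+1}`.
-/

/-- First-order terms/atoms over function-and-predicate symbols `F` and variables `V`. -/
inductive FOTerm (F V : Type) : Type
  | var : V → FOTerm F V
  | fn : F → List (FOTerm F V) → FOTerm F V

namespace FOTerm

variable {F V : Type}

/-- Apply a variable renaming to a term. -/
def rename (ρ : V → V) : FOTerm F V → FOTerm F V
  | var v => var (ρ v)
  | fn f ts => fn f (ts.attach.map fun t => rename ρ t.1)
  decreasing_by simp_wf; have := List.sizeOf_lt_of_mem t.2; omega

/-- The size of a term: the number of occurrences of function symbols,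
variables and constants. -/
def size : FOTerm F V → ℕ
  | var _ => 1
  | fn _ ts => 1 + (ts.attach.map fun t => size t.1).sum
  decreasing_by simp_wf; have := List.sizeOf_lt_of_mem t.2; omega

/-- Two atoms are variants if an injective renaming of variables maps one to the other. -/
def IsVariant (A B : FOTerm F V) : Prop :=
  ∃ ρ : V → V, Function.Injective ρ ∧ rename ρ A = B

/-- `Grows B A`: `B` is identical to `A` except that some subterms of `A` grow,
at the corresponding positions in `B`, into terms properly containing them. -/
inductive Grows : FOTerm F V → FOTerm F V → Prop
  | refl (t : FOTerm F V) : Grows t t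
  | congr (f : F) (ts ts' : List (FOTerm F V)) (hlen : ts'.length = ts.length)
      (hargs : ∀ (i : ℕ) (hi' : i < ts'.length) (hi : i < ts.length),
        Grows (ts'.get ⟨i, hi'⟩) (ts.get ⟨i, hi⟩)) :
      Grows (fn f ts') (fn f ts)
  | grow (f : F) (ts : List (FOTerm F V)) (t t' : FOTerm F V)
      (hmem : t' ∈ ts) (h : Grows t' t) : Grows (fn f ts) t

/-- `A'` is an expanded variant of `A` (written `A' ⊒_EV A`): after an injective
variable renaming, `A'` becomes a term that equals `A` except that some subterms
of `A` grow into terms properly containing them. -/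
def EV (A' A : FOTerm F V) : Prop :=
  ∃ ρ : V → V, Function.Injective ρ ∧ Grows (rename ρ A') A

/-- Expanded variant with at least one growing term. -/
def EVStrict (A' A : FOTerm F V) : Prop :=
  ∃ ρ : V → V, Function.Injective ρ ∧ Grows (rename ρ A') A ∧ rename ρ A' ≠ A

end FOTerm
/-- Signature for STATEMENT 17: predicate `append`, list constructors. -/
inductive Sym17 : Type
  | append | cons | nil

/-- The variable `Y_n`. -/
def yvar (n : ℕ) : ℕ := 2 * n

/-- The variable `X_n`. -/
def xvar (n : ℕ) : ℕ := 2 * n + 1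

/-- The second argument `L n` of the `n`-th selected subgoal:
`L 0 = Y_0` and `L (n+1) = cons(X_{n+1}, (L n)[Y_n := Y_{n+1}])`. -/
def appList : ℕ → FOTerm Sym17 ℕ
  | 0 => .var (yvar 0)
  | n + 1 =>
      .fn .cons [.var (xvar (n + 1)),
        FOTerm.rename (Equiv.swap (yvar n) (yvar (n + 1))) (appList n)]

/-- The `n`-th selected subgoal `A_n = append(Y_n, L n, Y_n)`. -/
def appAtom (n : ℕ) : FOTerm Sym17 ℕ :=
  .fn .append [.var (yvar n), appList n, .var (yvar n)]

namespace FOTerm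

variable {F V : Type}

@[simp]
lemma rename_var (ρ : V → V) (v : V) : rename ρ (var v : FOTerm F V) = var (ρ v) := by
  rw [rename]

@[simp]
lemma rename_fn (ρ : V → V) (f : F) (ts : List (FOTerm F V)) :
    rename ρ (fn f ts) = fn f (ts.map (rename ρ)) := by
  rw [rename, List.map_attach_eq_pmap, List.pmap_eq_map]

@[simp]
lemma size_var (v : V) : size (var v : FOTerm F V) = 1 := by
  rw [size]

@[simp]
lemma size_fn (f : F) (ts : List (FOTerm F V)) :
    size (fn f ts) = 1 + (ts.map size).sum := by
  rw [size, List.map_attach_eq_pmap, List.pmap_eq_map]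

lemma rename_rename (ρ σ : V → V) :
    ∀ t : FOTerm F V, rename ρ (rename σ t) = rename (ρ ∘ σ) t
  | var v => by simp
  | fn f ts => by
    simp only [rename_fn, List.map_map, fn.injEq, true_and]
    exact List.map_congr_left fun t _ => rename_rename ρ σ t

lemma rename_id : ∀ t : FOTerm F V, rename id t = t
  | var v => by simp
  | fn f ts => by
    simp only [rename_fn, fn.injEq, true_and]
    exact List.map_congr_left (fun t _ => rename_id t) |>.trans ts.map_id

lemma size_rename (ρ : V → V) : ∀ t : FOTerm F V, size (rename ρ t) = size t
  | var v => by simp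
  | fn f ts => by
    simp only [size_fn, rename_fn, List.map_map]
    congr 2
    exact List.map_congr_left fun t _ => size_rename ρ t

lemma Grows.fn_of_forall₂ (f : F) {ts' ts : List (FOTerm F V)}
    (h : List.Forall₂ Grows ts' ts) : Grows (fn f ts') (fn f ts) :=
  have ⟨hlen, hargs⟩ := List.forall₂_iff_get.mp h
  .congr f ts ts' hlen hargs

lemma Grows.fn_of_mem (f : F) {t : FOTerm F V} {ts : List (FOTerm F V)} (h : t ∈ ts) :
    Grows (fn f ts) t :=
  .grow f ts t t h (.refl t)

end FOTerm

open FOTerm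

lemma xvar_ne_yvar (m n : ℕ) : xvar m ≠ yvar n := by
  unfold xvar yvar
  omega

lemma rename_swap_appList_succ (n : ℕ) :
    rename (Equiv.swap (yvar n) (yvar (n + 1))) (appList (n + 1)) =
      .fn .cons [.var (xvar (n + 1)), appList n] := by
  have hX : Equiv.swap (yvar n) (yvar (n + 1)) (xvar (n + 1)) = xvar (n + 1) :=
    Equiv.swap_apply_of_ne_of_ne (xvar_ne_yvar _ _) (xvar_ne_yvar _ _)
  simp only [appList, rename_fn, List.map_cons, List.map_nil, rename_var, hX, rename_rename,
    ← Equiv.coe_trans, Equiv.swap_swap, Equiv.coe_refl, rename_id]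

lemma rename_swap_appAtom_succ (n : ℕ) :
    rename (Equiv.swap (yvar n) (yvar (n + 1))) (appAtom (n + 1)) =
      .fn .append [.var (yvar n), .fn .cons [.var (xvar (n + 1)), appList n], .var (yvar n)] := by
  simp only [appAtom, rename_fn, List.map_cons, List.map_nil, rename_var,
    Equiv.swap_apply_right, rename_swap_appList_succ]

lemma appAtom_succ_ev (n : ℕ) : EV (appAtom (n + 1)) (appAtom n) := by
  refine ⟨Equiv.swap (yvar n) (yvar (n + 1)), Equiv.injective _, ?_⟩
  rw [rename_swap_appAtom_succ, appAtom]
  exact Grows.fn_of_forall₂ _ <|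
    .cons (.refl _) <| .cons (Grows.fn_of_mem _ (by simp)) <| .cons (.refl _) .nil

lemma size_appList_succ (n : ℕ) : (appList (n + 1)).size = (appList n).size + 2 := by
  simp only [appList, size_fn, List.map_cons, List.map_nil, List.sum_cons, List.sum_nil,
    size_var, size_rename]
  omega

lemma size_appAtom (n : ℕ) : (appAtom n).size = (appList n).size + 3 := by
  simp only [appAtom, size_fn, List.map_cons, List.map_nil, List.sum_cons, List.sum_nil, size_var]
  omega

/-- the chain of selected subgoals for `append([X|Y],Y,[Z|Y])`
starts with `append(Y,Y,Y)` and each `A_{n+1}` is an expanded variant of `A_n`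
with strictly larger size, so the non-termination criterion is satisfied. -/
theorem append_nontermination_chain :
    appAtom 0 = .fn .append [.var (yvar 0), .var (yvar 0), .var (yvar 0)] ∧
    ∀ n, FOTerm.EV (appAtom (n + 1)) (appAtom n) ∧
      (appAtom n).size < (appAtom (n + 1)).size := by
  refine ⟨rfl, fun n => ⟨appAtom_succ_ev n, ?_⟩⟩
  rw [size_appAtom, size_appAtom, size_appList_succ]
  omega
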